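/- arXiv:1905.05557 — 9 statements merged into one kernel-verified Lean document; each statement's English description precedes it below -/
import Mathlib

section
/- Let q be a positive integer, Q = (q+1)/2, and let Δ be a nonnegative integer. Suppose m is a nonnegative integer and v_1, …, v_m are integers satisfying: (i) ∑_{i=1}^m v_i = Δ; (ii) v_i + v_j ≥ q + 1 for all i ≠ j; (iii) 1 ≤ v_i ≤ q for all i. Then m ≤ π(Δ), where π(Δ) = ⌈Δ/q⌉ if Δ ≤ q and π(Δ) = ⌈(Δ−q)/⌈Q⌉⌉ + 1 if Δ > q. -/
/-- Ceiling division of natural numbers: `cdiv a b = ⌈a / b⌉` (for `b > 0`). -/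
def cdiv (a b : ℕ) : ℕ := (a + b - 1) / b

/-- `⌈Q⌉` where `Q = (q+1)/2`. -/
def Qceil (q : ℕ) : ℕ := cdiv (q + 1) 2

/-- `⌊Q⌋` where `Q = (q+1)/2`. -/
def Qfloor (q : ℕ) : ℕ := (q + 1) / 2

/-- `π(Δ) = ⌈Δ/q⌉` if `Δ ≤ q`, and `π(Δ) = ⌈(Δ−q)/⌈Q⌉⌉ + 1` if `Δ > q`. -/
def piF (q Δ : ℕ) : ℕ := if Δ ≤ q then cdiv Δ q else cdiv (Δ - q) (Qceil q) + 1

/-- any feasible solution of the single-depot formulation `SDF` with total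
demand `Δ` uses at most `π(Δ)` vehicles. -/
theorem sdf_upper_bound (q : ℕ) (hq : 0 < q) (Δ : ℕ) (m : ℕ) (v : Fin m → ℤ)
    (hsum : ∑ i, v i = (Δ : ℤ))
    (hpair : ∀ i j : Fin m, i ≠ j → (q : ℤ) + 1 ≤ v i + v j)
    (hlb : ∀ i, 1 ≤ v i) (hub : ∀ i, v i ≤ (q : ℤ)) :
    m ≤ piF q Δ := by
  rcases m with _ | _ | n
  · exact Nat.zero_le _
  · -- m = 1
    have h1 : (1:ℤ) ≤ (Δ:ℤ) := by
      rw [← hsum, Fin.sum_univ_one]; exact hlb 0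
    have hΔ : 1 ≤ Δ := by exact_mod_cast h1
    unfold piF cdiv
    split
    · rw [Nat.le_div_iff_mul_le hq]; omega
    · exact Nat.succ_le_succ (Nat.zero_le _)
  · -- m = n + 2
    set c : ℕ := Qceil q with hc
    have hc2 : 2 * c ≤ q + 2 ∧ q + 1 ≤ 2 * c := by
      constructor <;> · simp only [hc, Qceil, cdiv]; omega
    have hcpos : 0 < c := by omega
    -- minimal index
    obtain ⟨a, -, ha⟩ := Finset.exists_min_image Finset.univ v Finset.univ_nonempty
    -- another index
    obtain ⟨b, -, hb⟩ := Finset.exists_mem_ne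
      (s := (Finset.univ : Finset (Fin (n+2)))) (by simp) a
    -- every k ≠ a satisfies c ≤ v k
    have hkey : ∀ k : Fin (n+2), k ≠ a → (c : ℤ) ≤ v k := by
      intro k hk
      have h1 := hpair a k (Ne.symm hk)
      have h2 := ha k (Finset.mem_univ k)
      have h3 : (2 * c : ℤ) ≤ (q:ℤ) + 2 := by exact_mod_cast hc2.1
      omega
    -- split the sum
    have hsplit : ∑ i, v i = v a + (v b + ∑ k ∈ (Finset.univ.erase a).erase b, v k) := by
      rw [Finset.add_sum_erase _ v (Finset.mem_erase.mpr ⟨hb, Finset.mem_univ b⟩),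
        Finset.add_sum_erase _ v (Finset.mem_univ a)]
    have hcard : ((Finset.univ.erase a).erase b).card = n := by
      rw [Finset.card_erase_of_mem (Finset.mem_erase.mpr ⟨hb, Finset.mem_univ b⟩),
        Finset.card_erase_of_mem (Finset.mem_univ a)]
      simp
    have hrest : (n : ℤ) * (c : ℤ) ≤ ∑ k ∈ (Finset.univ.erase a).erase b, v k := by
      have := Finset.card_nsmul_le_sum ((Finset.univ.erase a).erase b) v (c : ℤ)
        (fun k hk => by
          have hk' := Finset.mem_erase.mp hk
          have hk'' := Finset.mem_erase.mp hk'.2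
          exact hkey k hk''.1)
      rw [hcard] at this
      simpa [nsmul_eq_mul] using this
    have hab : (q:ℤ) + 1 ≤ v a + v b := hpair a b (Ne.symm hb)
    have hΔZ : (q:ℤ) + 1 + (n:ℤ) * (c:ℤ) ≤ (Δ : ℤ) := by
      rw [← hsum, hsplit]; linarith
    have hΔ : q + 1 + n * c ≤ Δ := by exact_mod_cast hΔZ
    have hgt : ¬ (Δ ≤ q) := by nlinarith [Nat.zero_le (n * c)]
    unfold piF
    rw [if_neg hgt]
    obtain ⟨g, rfl⟩ : ∃ g, Δ = q + g := ⟨Δ - q, by omega⟩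
    have hg : n * c + 1 ≤ g := by omega
    have hgsub : q + g - q = g := by omega
    rw [hgsub, ← hc]
    have key : n + 1 ≤ cdiv g c := by
      unfold cdiv
      rw [Nat.le_div_iff_mul_le hcpos]
      have h5 : (n + 1) * c = n * c + c := by ring
      have h6 : (n + 1) * c + 1 ≤ g + c := by rw [h5]; omega
      exact Nat.le_pred_of_lt h6
    exact Nat.succ_le_succ key
end

section
/- Let q be a positive integer, Q = (q+1)/2, and let Δ be a nonnegative integer. Then there exist a nonnegative integer m with m = π(Δ) and integers v_1, …, v_m satisfying: (i) ∑_{i=1}^m v_i = Δ; (ii) v_i + v_j ≥ q + 1 for all i ≠ j; (iii) 1 ≤ v_i ≤ q for all i. In particular, when Δ > q one can take m = ⌈(Δ−q)/⌈Q⌉⌉ + 1, v_i = ⌈Q⌉ for i < m, and v_m = Δ − ⌈Q⌉·⌈(Δ−q)/⌈Q⌉⌉. -/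
lemma cdiv_bounds (a b : ℕ) (hb : 0 < b) : a ≤ b * cdiv a b ∧ b * cdiv a b ≤ a + b - 1 := by
  unfold cdiv
  have h := Nat.div_add_mod (a + b - 1) b
  have h2 := Nat.mod_lt (a + b - 1) hb
  generalize (a + b - 1) / b = d at h ⊢
  generalize (a + b - 1) % b = r at h h2
  generalize b * d = t at h ⊢
  omega

/-- the bound `π(Δ)` for the single-depot formulation `SDF` is attained;
in particular, for `Δ > q` one can take `m = ⌈(Δ−q)/⌈Q⌉⌉ + 1`, `v i = ⌈Q⌉` for `i < m`
and `v m = Δ − ⌈Q⌉⌈(Δ−q)/⌈Q⌉⌉`. -/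
theorem sdf_bound_attained (q : ℕ) (hq : 0 < q) (Δ : ℕ) :
    ∃ (m : ℕ) (v : Fin m → ℤ), m = piF q Δ ∧
      (∑ i, v i = (Δ : ℤ)) ∧
      (∀ i j : Fin m, i ≠ j → (q : ℤ) + 1 ≤ v i + v j) ∧
      (∀ i, 1 ≤ v i ∧ v i ≤ (q : ℤ)) ∧
      (q < Δ → m = cdiv (Δ - q) (Qceil q) + 1 ∧
        ∀ i : Fin m, v i = if (i : ℕ) + 1 < m then (Qceil q : ℤ)
          else (Δ : ℤ) - (Qceil q : ℤ) * (cdiv (Δ - q) (Qceil q) : ℤ)) := by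
  by_cases hΔq : Δ ≤ q
  · by_cases hΔ0 : Δ = 0
    · subst hΔ0
      refine ⟨0, fun i => i.elim0, ?_, by simp, by simp, by simp, by omega⟩
      simp [piF, cdiv, Nat.div_eq_of_lt (by omega : q - 1 < q), hq.le]
    · have hb := cdiv_bounds Δ q hq
      have hc1 : 1 ≤ cdiv Δ q := by
        rcases Nat.eq_zero_or_pos (cdiv Δ q) with h | h
        · rw [h] at hb; omega
        · exact h
      have hc2 : cdiv Δ q < 2 := by
        by_contra h
        push_neg at h
        have : q * 2 ≤ q * cdiv Δ q := Nat.mul_le_mul_left q h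
        omega
      refine ⟨1, fun _ => (Δ : ℤ), ?_, by simp, ?_, ?_, by omega⟩
      · simp [piF, hΔq]; omega
      · intro i j hij
        exact absurd (Subsingleton.elim i j) hij
      · intro i
        dsimp only
        constructor
        · exact_mod_cast Nat.one_le_iff_ne_zero.mpr hΔ0
        · exact_mod_cast hΔq
  · push_neg at hΔq
    have hc := cdiv_bounds (q + 1) 2 (by norm_num)
    set c := Qceil q with hcdef
    have hcc : c = cdiv (q + 1) 2 := rfl
    rw [← hcc] at hc
    have hcpos : 0 < c := by omega
    have hcq : c ≤ q := by omega
    set k := cdiv (Δ - q) c with hkdef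
    have hk := cdiv_bounds (Δ - q) c hcpos
    rw [← hkdef] at hk
    have hkpos : 1 ≤ k := by
      rcases Nat.eq_zero_or_pos k with h | h
      · rw [h, Nat.mul_zero] at hk; omega
      · exact h
    have e1 : Δ - q ≤ c * k := hk.1
    have e2 : c * k ≤ Δ - q + c - 1 := hk.2
    zify [show q ≤ Δ from hΔq.le, show 1 ≤ Δ - q + c from by omega] at e1 e2
    refine ⟨k + 1, fun i => if (i : ℕ) + 1 < k + 1 then (c : ℤ)
      else (Δ : ℤ) - (c : ℤ) * (k : ℤ), ?_, ?_, ?_, ?_, fun _ => ⟨rfl, fun i => rfl⟩⟩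
    · rw [piF, if_neg (not_le.mpr hΔq)]
    · dsimp only
      rw [Fin.sum_univ_castSucc]
      have h1 : ∀ i : Fin k,
          (if ((i.castSucc : Fin (k+1)) : ℕ) + 1 < k + 1 then (c : ℤ)
            else (Δ : ℤ) - (c : ℤ) * (k : ℤ)) = (c : ℤ) := by
        intro i
        rw [if_pos (show ((i.castSucc : Fin (k+1)) : ℕ) + 1 < k + 1 by
          simp only [Fin.coe_castSucc]; omega)]
      rw [Finset.sum_congr rfl (fun i _ => h1 i), Finset.sum_const]
      have h2 : ¬ ((Fin.last k : Fin (k+1)) : ℕ) + 1 < k + 1 := by simp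
      rw [if_neg h2]
      simp only [Finset.card_univ, Fintype.card_fin, nsmul_eq_mul]
      ring
    · intro i j hij
      dsimp only
      by_cases hi : (i : ℕ) + 1 < k + 1 <;> by_cases hj : (j : ℕ) + 1 < k + 1
      · rw [if_pos hi, if_pos hj]
        have : (q : ℤ) + 1 ≤ 2 * c := by exact_mod_cast hc.1
        linarith
      · rw [if_pos hi, if_neg hj]
        have : (q : ℤ) + 1 ≤ 2 * c := by exact_mod_cast hc.1
        linarith
      · rw [if_neg hi, if_pos hj]
        have : (q : ℤ) + 1 ≤ 2 * c := by exact_mod_cast hc.1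
        linarith
      · exfalso
        apply hij
        apply Fin.ext
        have := i.isLt
        have := j.isLt
        omega
    · intro i
      dsimp only
      by_cases hi : (i : ℕ) + 1 < k + 1
      · rw [if_pos hi]
        constructor
        · exact_mod_cast hcpos
        · exact_mod_cast hcq
      · rw [if_neg hi]
        constructor
        · have : (q : ℤ) + 1 ≤ 2 * c := by exact_mod_cast hc.1
          have hcqz : (c : ℤ) ≤ q := by exact_mod_cast hcq
          linarith
        · linarith
end

section
/- Let q be a positive integer and Q = (q+1)/2. For every nonnegative integer α, θ(α) ≤ α, where θ(α) = π(α) if α ≤ q and θ(α) = (π(α)−1)·⌈Q⌉ + ⌊Q⌋ if α > q. -/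
/-- `θ(α) = π(α)` if `α ≤ q`, and `θ(α) = (π(α)−1)·⌈Q⌉ + ⌊Q⌋` if `α > q`. -/
def thetaF (q α : ℕ) : ℕ := if α ≤ q then piF q α else (piF q α - 1) * Qceil q + Qfloor q

/-- `θ(α) ≤ α` for every nonnegative integer `α`. -/
theorem theta_le_self (q : ℕ) (hq : 0 < q) (α : ℕ) : thetaF q α ≤ α := by
  unfold thetaF piF
  by_cases h : α ≤ q
  · simp only [h, if_true]
    unfold cdiv
    rcases Nat.eq_zero_or_pos α with h0 | h0
    · subst h0
      have := Nat.div_eq_of_lt (show 0 + q - 1 < q by omega)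
      omega
    · have h1 : (α + q - 1) / q < 2 := by
        rw [Nat.div_lt_iff_lt_mul hq]; omega
      omega
  · simp only [h, if_false]
    have hc : Qceil q = (q + 2) / 2 := by unfold Qceil cdiv; omega
    have hcpos : 0 < Qceil q := by omega
    have key : cdiv (α - q) (Qceil q) * Qceil q ≤ α - q + Qceil q - 1 := by
      unfold cdiv
      exact Nat.div_mul_le_self _ _
    have hsum : Qceil q + Qfloor q = q + 1 := by unfold Qfloor; omega
    simp only [Nat.add_sub_cancel]
    omega
end

section
/- Let q be a positive integer and Q = (q+1)/2. For every nonnegative integer α, π(θ(α)) = π(α). -/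
/-!
For `α ≤ q`, `π(α)` is `0` or `1` and `π` fixes both values. For `α > q`, write `π(α) = k + 1`
with `k ≥ 1`; since `⌈Q⌉ + ⌊Q⌋ = q + 1`, `θ(α) - q = (k - 1)⌈Q⌉ + 1`, whose ceiling quotient by
`⌈Q⌉` is again `k`.
-/

theorem cdiv_zero_left (b : ℕ) : cdiv 0 b = 0 := by
  unfold cdiv
  rcases Nat.eq_zero_or_pos b with rfl | hb
  · rfl
  · exact Nat.div_eq_of_lt (by omega)

theorem cdiv_eq_one {a b : ℕ} (ha : 0 < a) (hab : a ≤ b) : cdiv a b = 1 :=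
  Nat.div_eq_of_lt_le (by omega) (by omega)

theorem cdiv_pos {a b : ℕ} (ha : 0 < a) (hb : 0 < b) : 0 < cdiv a b :=
  (Nat.one_le_div_iff hb).2 (by omega)

theorem cdiv_mul_add_one (k : ℕ) {c : ℕ} (hc : 0 < c) : cdiv (k * c + 1) c = k + 1 := by
  have h : k * c + 1 + c - 1 = (k + 1) * c := by rw [Nat.succ_mul]; omega
  rw [cdiv, h, Nat.mul_div_cancel _ hc]

theorem Qceil_pos (q : ℕ) : 0 < Qceil q := by
  simp only [Qceil, cdiv]
  omega

theorem Qceil_add_Qfloor (q : ℕ) : Qceil q + Qfloor q = q + 1 := by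
  simp only [Qceil, Qfloor, cdiv]
  omega

theorem piF_zero (q : ℕ) : piF q 0 = 0 := by
  rw [piF, if_pos (Nat.zero_le q), cdiv_zero_left]

theorem piF_of_pos_of_le {q n : ℕ} (hn : 0 < n) (hnq : n ≤ q) : piF q n = 1 := by
  rw [piF, if_pos hnq, cdiv_eq_one hn hnq]

theorem piF_of_lt {q n : ℕ} (hqn : q < n) : piF q n = cdiv (n - q) (Qceil q) + 1 :=
  if_neg (Nat.not_le.2 hqn)

theorem thetaF_of_lt {q α : ℕ} (hqα : q < α) :
    thetaF q α = cdiv (α - q) (Qceil q) * Qceil q + Qfloor q := by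
  rw [thetaF, if_neg (Nat.not_le.2 hqα), piF_of_lt hqα, Nat.add_sub_cancel]

theorem piF_mul_Qceil_add_Qfloor (q : ℕ) {k : ℕ} (hk : 0 < k) :
    piF q (k * Qceil q + Qfloor q) = k + 1 := by
  obtain ⟨m, rfl⟩ : ∃ m, k = m + 1 := ⟨k - 1, by omega⟩
  have hsum := Qceil_add_Qfloor q
  have h : (m + 1) * Qceil q + Qfloor q = m * Qceil q + 1 + q := by rw [Nat.succ_mul]; omega
  rw [piF_of_lt (by omega), h, Nat.add_sub_cancel, cdiv_mul_add_one m (Qceil_pos q)]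

theorem pi_theta_eq_pi_general (q : ℕ) (α : ℕ) : piF q (thetaF q α) = piF q α := by
  by_cases hαq : α ≤ q
  · have hθ : thetaF q α = piF q α := if_pos hαq
    rcases Nat.eq_zero_or_pos α with rfl | hα
    · rw [hθ, piF_zero, piF_zero]
    · rw [hθ, piF_of_pos_of_le hα hαq, piF_of_pos_of_le Nat.one_pos (hα.trans_le hαq)]
  · have hqα : q < α := Nat.lt_of_not_le hαq
    rw [thetaF_of_lt hqα, piF_of_lt hqα,
      piF_mul_Qceil_add_Qfloor q (cdiv_pos (Nat.sub_pos_of_lt hqα) (Qceil_pos q))]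

/-- `π(θ(α)) = π(α)` for every nonnegative integer `α`. -/
theorem pi_theta_eq_pi (q : ℕ) (hq : 0 < q) (α : ℕ) : piF q (thetaF q α) = piF q α :=
  pi_theta_eq_pi_general q α
end

section
/- Let q be a positive integer and Q = (q+1)/2. For all positive integers α and β with q < α < β − q, one has π(α) + π(β − α) ≤ 1 + π(β − ⌊Q⌋). -/
/-- for positive integers `α, β` with `q < α < β − q`,
`π(α) + π(β − α) ≤ 1 + π(β − ⌊Q⌋)`. -/
theorem pi_split_bound (q : ℕ) (hq : 0 < q) (α β : ℕ) (hα : 0 < α) (hβ : 0 < β)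
    (h1 : q < α) (h2 : (α : ℤ) < (β : ℤ) - (q : ℤ)) :
    piF q α + piF q (β - α) ≤ 1 + piF q (β - Qfloor q) := by
  obtain ⟨a, ha⟩ : ∃ a, α = q + 1 + a := ⟨α - (q+1), by omega⟩
  obtain ⟨b, hb⟩ : ∃ b, β = α + q + 1 + b := ⟨β - (α+q+1), by omega⟩
  subst ha; subst hb
  have hC : 0 < Qceil q := by unfold Qceil cdiv; omega
  set C := Qceil q with hCdef
  have hF : Qfloor q + C = q + 1 := by
    rw [hCdef]; unfold Qfloor Qceil cdiv; omega
  have hFle : Qfloor q ≤ q := by unfold Qfloor; omega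
  rw [piF, piF, piF, if_neg (by omega), if_neg (by omega), if_neg (by omega)]
  have e1 : q + 1 + a - q = a + 1 := by omega
  have e2 : q + 1 + a + q + 1 + b - (q + 1 + a) - q = b + 1 := by omega
  have e3 : q + 1 + a + q + 1 + b - Qfloor q - q = a + b + C + 1 := by omega
  rw [e1, e2, e3]
  unfold cdiv
  have h1 : a + 1 + C - 1 = a + C := by omega
  have h2 : b + 1 + C - 1 = b + C := by omega
  have h3 : a + b + C + 1 + C - 1 = (a + C) + (b + C) := by omega
  rw [h1, h2, h3, ← hCdef]
  have key : (a + C) / C + (b + C) / C ≤ ((a + C) + (b + C)) / C := by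
    rw [Nat.le_div_iff_mul_le hC, add_mul]
    have t1 := Nat.div_mul_le_self (a + C) C
    have t2 := Nat.div_mul_le_self (b + C) C
    omega
  omega
end

section
/- Let q be a positive integer and Q = (q+1)/2. For every nonnegative integer α and every positive integer β with α ≤ β, one has π(α) + π(β − α) ≤ 1 + π(β − 1). -/
lemma cdiv_mono (c : ℕ) {a b : ℕ} (h : a ≤ b) : cdiv a c ≤ cdiv b c :=
  Nat.div_le_div_right (by omega)

lemma cdiv_zero_left_s8 {c : ℕ} (hc : 0 < c) : cdiv 0 c = 0 := by
  unfold cdiv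
  exact Nat.div_eq_of_lt (by omega)

lemma cdiv_le_one {a q : ℕ} (h : a ≤ q) (hq : 0 < q) : cdiv a q ≤ 1 := by
  unfold cdiv
  have : (a + q - 1) / q < 2 := by
    rw [Nat.div_lt_iff_lt_mul hq]; omega
  omega

lemma one_le_cdiv {a c : ℕ} (ha : 0 < a) (hc : 0 < c) : 1 ≤ cdiv a c := by
  unfold cdiv
  rw [Nat.le_div_iff_mul_le hc]; omega

lemma one_le_piF {q n : ℕ} (hq : 0 < q) (hn : 0 < n) : 1 ≤ piF q n := by
  unfold piF
  have hC : 0 < Qceil q := by unfold Qceil cdiv; omega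
  split
  · exact one_le_cdiv hn hq
  · omega

lemma cdiv_succ_le {n c : ℕ} (hc : 0 < c) : cdiv (n + 1) c ≤ cdiv n c + 1 := by
  unfold cdiv
  have h1 : n + 1 + c - 1 = n + c := by omega
  rw [h1, Nat.add_div_right _ hc]
  have : n / c ≤ (n + c - 1) / c := Nat.div_le_div_right (by omega)
  omega

lemma div_add_div_le (a b c : ℕ) (hc : 0 < c) : a / c + b / c ≤ (a + b) / c := by
  rw [Nat.le_div_iff_mul_le hc, Nat.add_mul]
  have h1 := Nat.div_mul_le_self a c
  have h2 := Nat.div_mul_le_self b c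
  omega

lemma cdiv_add_cdiv_le {a b c q : ℕ} (hc : 0 < c) (hcq : c ≤ q) :
    cdiv a c + cdiv b c ≤ cdiv (a + b + q - 1) c := by
  unfold cdiv
  calc (a + c - 1) / c + (b + c - 1) / c
      ≤ ((a + c - 1) + (b + c - 1)) / c := div_add_div_le _ _ _ hc
    _ ≤ (a + b + q - 1 + c - 1) / c := Nat.div_le_div_right (by omega)

/-- for `0 ≤ α ≤ β` with `β ≥ 1`, `π(α) + π(β − α) ≤ 1 + π(β − 1)`. -/
theorem pi_split_le (q : ℕ) (hq : 0 < q) (α β : ℕ) (hβ : 0 < β) (hab : α ≤ β) :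
    piF q α + piF q (β - α) ≤ 1 + piF q (β - 1) := by
  have hC : 0 < Qceil q := by unfold Qceil cdiv; omega
  have hCq : Qceil q ≤ q := by unfold Qceil cdiv; omega
  -- reduce to the "one-sided" bound when α = 0 or α = β
  have step : piF q β ≤ 1 + piF q (β - 1) := by
    unfold piF
    by_cases h1 : β ≤ q
    · rw [if_pos h1, if_pos (by omega)]
      exact le_trans (cdiv_le_one h1 hq) (by omega)
    · rw [if_neg h1]
      by_cases h2 : β - 1 ≤ q
      · -- β = q + 1
        rw [if_pos h2]
        have hβq : β - q = 1 := by omega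
        rw [hβq]
        have h3 : cdiv 1 (Qceil q) ≤ 1 := by
          unfold cdiv
          rw [Nat.div_le_iff_le_mul_add_pred hC]; omega
        have h4 : 1 ≤ cdiv (β - 1) q := one_le_cdiv (by omega) hq
        omega
      · rw [if_neg h2]
        have : β - q = (β - 1 - q) + 1 := by omega
        rw [this]
        have := cdiv_succ_le (n := β - 1 - q) hC
        omega
  rcases Nat.eq_zero_or_pos α with h0 | hα
  · subst h0
    simp only [Nat.sub_zero]
    have : piF q 0 = 0 := by unfold piF; rw [if_pos (by omega)]; exact cdiv_zero_left_s8 hq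
    omega
  rcases eq_or_lt_of_le hab with heq | hlt
  · subst heq
    have : piF q (α - α) = 0 := by
      simp only [Nat.sub_self]
      unfold piF; rw [if_pos (by omega)]; exact cdiv_zero_left_s8 hq
    omega
  -- now 1 ≤ α < β
  set γ := β - α with hγ
  have hγ1 : 1 ≤ γ := by omega
  have hβ2 : 2 ≤ β := by omega
  by_cases hαq : α ≤ q
  · by_cases hγq : γ ≤ q
    · -- both ≤ q
      have h1 : piF q α ≤ 1 := by unfold piF; rw [if_pos hαq]; exact cdiv_le_one hαq hq
      have h2 : piF q γ ≤ 1 := by unfold piF; rw [if_pos hγq]; exact cdiv_le_one hγq hq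
      have h3 : 1 ≤ piF q (β - 1) := one_le_piF hq (by omega)
      omega
    · -- α ≤ q < γ
      have h1 : piF q α ≤ 1 := by unfold piF; rw [if_pos hαq]; exact cdiv_le_one hαq hq
      have hb1 : ¬ (β - 1 ≤ q) := by omega
      have h2 : piF q γ = cdiv (γ - q) (Qceil q) + 1 := by unfold piF; rw [if_neg hγq]
      have h3 : piF q (β - 1) = cdiv (β - 1 - q) (Qceil q) + 1 := by
        unfold piF; rw [if_neg hb1]
      have h4 : cdiv (γ - q) (Qceil q) ≤ cdiv (β - 1 - q) (Qceil q) :=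
        cdiv_mono _ (by omega)
      omega
  · by_cases hγq : γ ≤ q
    · -- γ ≤ q < α
      have h1 : piF q γ ≤ 1 := by unfold piF; rw [if_pos hγq]; exact cdiv_le_one hγq hq
      have hb1 : ¬ (β - 1 ≤ q) := by omega
      have h2 : piF q α = cdiv (α - q) (Qceil q) + 1 := by unfold piF; rw [if_neg hαq]
      have h3 : piF q (β - 1) = cdiv (β - 1 - q) (Qceil q) + 1 := by
        unfold piF; rw [if_neg hb1]
      have h4 : cdiv (α - q) (Qceil q) ≤ cdiv (β - 1 - q) (Qceil q) :=
        cdiv_mono _ (by omega)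
      omega
    · -- both > q
      have hb1 : ¬ (β - 1 ≤ q) := by omega
      have h1 : piF q α = cdiv (α - q) (Qceil q) + 1 := by unfold piF; rw [if_neg hαq]
      have h2 : piF q γ = cdiv (γ - q) (Qceil q) + 1 := by unfold piF; rw [if_neg hγq]
      have h3 : piF q (β - 1) = cdiv (β - 1 - q) (Qceil q) + 1 := by
        unfold piF; rw [if_neg hb1]
      have key : cdiv (α - q) (Qceil q) + cdiv (γ - q) (Qceil q) ≤
          cdiv ((α - q) + (γ - q) + q - 1) (Qceil q) := cdiv_add_cdiv_le hC hCq
      have heq2 : (α - q) + (γ - q) + q - 1 = β - 1 - q := by omega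
      rw [heq2] at key
      omega
end

section
/- Let q be a positive integer, Q = (q+1)/2, j a positive integer, c_1 ≥ c_2 ≥ … ≥ c_j positive integers, and δ a nonnegative integer with δ ≥ j. For k ∈ {1, …, j} define λ_k = (δ − j + 1) − ∑_{r=1}^{k−1}(θ(c_r) − 1), and let ℓ ∈ {1, …, j} be the largest index with λ_ℓ ≥ 1 (which exists since λ_1 = δ − j + 1 ≥ 1). Then every feasible vector (x_1, …, x_j) (nonnegative integers with x_i ≤ c_i and ∑_{i=1}^j x_i ≤ δ) satisfies ∑_{i=1}^j π(x_i) ≤ j − 1 + π(min(λ_ℓ, c_ℓ)) + ∑_{i=1}^{ℓ−1}(π(c_i) − 1). -/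
namespace DPF


def fB (q v : ℕ) : ℕ := if v ≤ 1 then v else q + 1 + (v - 2) * Qceil q

lemma cdiv_le_iff {b : ℕ} (hb : 0 < b) (a k : ℕ) : cdiv a b ≤ k ↔ a ≤ k * b := by
  unfold cdiv
  rw [Nat.div_le_iff_le_mul_add_pred hb, mul_comm]
  omega

lemma Qceil_pos (q : ℕ) : 1 ≤ Qceil q := by unfold Qceil cdiv; omega

lemma Qceil_add_Qfloor (q : ℕ) : Qceil q + Qfloor q = q + 1 := by
  unfold Qceil Qfloor cdiv; omega

lemma Qceil_le (q : ℕ) (hq : 1 ≤ q) : Qceil q ≤ q := by unfold Qceil cdiv; omega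

lemma piF_mono (q : ℕ) (hq : 0 < q) {a b : ℕ} (h : a ≤ b) : piF q a ≤ piF q b := by
  unfold piF
  have hQ := Qceil_pos q
  by_cases ha : a ≤ q <;> by_cases hb' : b ≤ q <;> simp only [ha, hb', if_true, if_false]
  · exact Nat.div_le_div_right (by omega)
  · have : cdiv a q ≤ 1 := (cdiv_le_iff hq a 1).mpr (by omega)
    omega
  · omega
  · have : cdiv (a - q) (Qceil q) ≤ cdiv (b - q) (Qceil q) :=
      Nat.div_le_div_right (by omega)
    omega

lemma piF_zero (q : ℕ) (hq : 0 < q) : piF q 0 = 0 := by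
  unfold piF cdiv
  simp only [if_pos (Nat.zero_le q)]
  rw [Nat.div_eq_of_lt (by omega)]

lemma piF_pos (q : ℕ) (hq : 0 < q) {x : ℕ} (hx : 1 ≤ x) : 1 ≤ piF q x := by
  unfold piF
  by_cases h : x ≤ q <;> simp only [h, if_true, if_false]
  · by_contra hcon
    have : cdiv x q ≤ 0 := by omega
    rw [cdiv_le_iff hq] at this; omega
  · omega

lemma piF_one (q : ℕ) (hq : 0 < q) {x : ℕ} (h1 : 1 ≤ x) (h2 : x ≤ q) : piF q x = 1 := by
  have h3 := piF_pos q hq h1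
  have h4 : piF q x ≤ 1 := by
    unfold piF; rw [if_pos h2, cdiv_le_iff hq]; omega
  omega

lemma piF_fB (q : ℕ) (hq : 0 < q) {w : ℕ} (hw : 1 ≤ w) : piF q (fB q w) = w := by
  have hQ := Qceil_pos q
  rcases Nat.lt_or_ge w 2 with h2 | h2
  · have : w = 1 := by omega
    subst this
    have : fB q 1 = 1 := by unfold fB; simp
    rw [this]; exact piF_one q hq le_rfl hq
  · obtain ⟨a, rfl⟩ : ∃ a, w = a + 2 := ⟨w - 2, by omega⟩
    have hfb : fB q (a + 2) = q + 1 + a * Qceil q := by unfold fB; simp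
    rw [hfb]
    unfold piF
    rw [if_neg (by omega)]
    have hsub : q + 1 + a * Qceil q - q = 1 + a * Qceil q := by omega
    rw [hsub]
    have hle : cdiv (1 + a * Qceil q) (Qceil q) ≤ a + 1 := by
      rw [cdiv_le_iff (by omega)]
      have : (a + 1) * Qceil q = a * Qceil q + Qceil q := by ring
      omega
    have hge : ¬ cdiv (1 + a * Qceil q) (Qceil q) ≤ a := by
      rw [cdiv_le_iff (by omega)]
      omega
    omega

lemma fB_piF_le (q : ℕ) (hq : 0 < q) (x : ℕ) : fB q (piF q x) ≤ x := by
  have hQ := Qceil_pos q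
  rcases Nat.eq_zero_or_pos x with rfl | hx
  · rw [piF_zero q hq]; unfold fB; simp
  rcases le_or_gt x q with h | h
  · rw [piF_one q hq hx h]; unfold fB; simp; omega
  · have hπ : piF q x = cdiv (x - q) (Qceil q) + 1 := by unfold piF; rw [if_neg (by omega)]
    set m := cdiv (x - q) (Qceil q) with hm
    have hm1 : 1 ≤ m := by
      by_contra hcon
      have : m ≤ 0 := by omega
      rw [hm, cdiv_le_iff (by omega)] at this; omega
    have hkey : ¬ (x - q ≤ (m - 1) * Qceil q) := by
      intro hcon
      have : cdiv (x - q) (Qceil q) ≤ m - 1 := by rw [cdiv_le_iff (by omega)]; exact hcon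
      omega
    rw [hπ]
    unfold fB
    rw [if_neg (by omega)]
    have : m + 1 - 2 = m - 1 := by omega
    rw [this]
    omega

lemma fB_pos (q : ℕ) {w : ℕ} (hw : 1 ≤ w) : 1 ≤ fB q w := by
  unfold fB; split <;> omega

lemma theta_eq_fB (q : ℕ) (hq : 0 < q) {c : ℕ} (hc : 1 ≤ c) :
    thetaF q c = fB q (piF q c) := by
  have hQQ := Qceil_add_Qfloor q
  have hQ := Qceil_pos q
  rcases le_or_gt c q with h | h
  · unfold thetaF
    rw [if_pos h, piF_one q hq hc h]
    unfold fB; simp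
  · have hπ : piF q c = cdiv (c - q) (Qceil q) + 1 := by unfold piF; rw [if_neg (by omega)]
    set m := cdiv (c - q) (Qceil q) with hm
    have hm1 : 1 ≤ m := by
      by_contra hcon
      have : m ≤ 0 := by omega
      rw [hm, cdiv_le_iff (by omega)] at this; omega
    unfold thetaF
    rw [if_neg (by omega), hπ]
    unfold fB
    rw [if_neg (by omega)]
    have e1 : m + 1 - 1 = m := by omega
    have e2 : m + 1 - 2 = m - 1 := by omega
    rw [e1, e2]
    obtain ⟨a, ha⟩ : ∃ a, m = a + 1 := ⟨m - 1, by omega⟩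
    rw [ha]
    have : (a + 1) * Qceil q = a * Qceil q + Qceil q := by ring
    simp only [Nat.add_sub_cancel]
    omega

/-- decomposition of `fB` with `Qg := Qfloor q - 1`. -/
lemma fB_decomp (q : ℕ) (hq : 0 < q) (v : ℕ) :
    fB q v = min v 1 + Qceil q * (v - 1) + (if 2 ≤ v then Qfloor q - 1 else 0) := by
  have hQQ := Qceil_add_Qfloor q
  have hQf : 1 ≤ Qfloor q := by unfold Qfloor; omega
  unfold fB
  rcases Nat.lt_or_ge v 2 with h | h
  · rw [if_pos (by omega), if_neg (by omega)]
    interval_cases v <;> simp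
  · rw [if_neg (by omega), if_pos h]
    obtain ⟨a, rfl⟩ : ∃ a, v = a + 2 := ⟨v - 2, by omega⟩
    have e : Qceil q * (a + 2 - 1) = a * Qceil q + Qceil q := by
      have : a + 2 - 1 = a + 1 := by omega
      rw [this]; ring
    simp only [Nat.add_sub_cancel]
    omega

lemma sum_mono_subset (g : ℕ → ℕ) (j : ℕ)
    (hg : ∀ a b, 1 ≤ a → a ≤ b → b ≤ j → g b ≤ g a) :
    ∀ (n : ℕ) (A : Finset ℕ), A ⊆ Finset.Icc 1 j → A.card = n →
      ∑ i ∈ A, g i ≤ ∑ i ∈ Finset.Icc 1 n, g i := by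
  intro n
  induction n with
  | zero =>
    intro A _ hc
    rw [Finset.card_eq_zero] at hc; subst hc; simp
  | succ k ih =>
    intro A hA hc
    have hne : A.Nonempty := Finset.card_pos.mp (by omega)
    set M := A.max' hne with hMdef
    have hMA : M ∈ A := A.max'_mem hne
    have hMj : M ∈ Finset.Icc 1 j := hA hMA
    rw [Finset.mem_Icc] at hMj
    have hsub : A ⊆ Finset.Icc 1 M := by
      intro a ha
      have h1 := hA ha
      rw [Finset.mem_Icc] at h1 ⊢
      exact ⟨h1.1, Finset.le_max' A a ha⟩
    have hcard : A.card ≤ M := by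
      calc A.card ≤ (Finset.Icc 1 M).card := Finset.card_le_card hsub
      _ = M := by rw [Nat.card_Icc]; omega
    have hstep : g M ≤ g (k + 1) := hg (k + 1) M (by omega) (by omega) hMj.2
    have hsplit : ∑ i ∈ A.erase M, g i + g M = ∑ i ∈ A, g i :=
      Finset.sum_erase_add A g hMA
    have hih := ih (A.erase M) (fun a ha => hA (Finset.erase_subset _ _ ha))
      (by rw [Finset.card_erase_of_mem hMA]; omega)
    rw [Finset.sum_Icc_succ_top (by omega : 1 ≤ k + 1)]
    omega



lemma fB_sub_one (q : ℕ) (hq : 0 < q) {w : ℕ} (hw : 1 ≤ w) :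
    fB q w - 1 = Qceil q * (w - 1) + (if 2 ≤ w then Qfloor q - 1 else 0) := by
  have := fB_decomp q hq w
  have hmin : min w 1 = 1 := by omega
  rw [hmin] at this
  omega

end DPF

/-- upper-bound half of Theorem 1: with sorted capacities and `δ ≥ j`,
every feasible vector of `DPF_j` has value at most
`j − 1 + π(min(λ_ℓ, c_ℓ)) + ∑_{i<ℓ} (π(c_i) − 1)`. -/
theorem dpf_optimal_value_upper (q : ℕ) (hq : 0 < q) (j : ℕ) (hj : 0 < j)
    (c : ℕ → ℕ) (hc : ∀ i, 1 ≤ i → i ≤ j → 0 < c i)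
    (hsort : ∀ i k, 1 ≤ i → i ≤ k → k ≤ j → c k ≤ c i)
    (δ : ℕ) (hδ : j ≤ δ)
    (lam : ℕ → ℤ)
    (hlam : ∀ k, lam k =
      (δ : ℤ) - (j : ℤ) + 1 - ∑ r ∈ Finset.Icc 1 (k - 1), ((thetaF q (c r) : ℤ) - 1))
    (ℓ : ℕ) (hℓ1 : 1 ≤ ℓ) (hℓj : ℓ ≤ j) (hℓpos : 1 ≤ lam ℓ)
    (hℓmax : ∀ k, 1 ≤ k → k ≤ j → 1 ≤ lam k → k ≤ ℓ)
    (x : ℕ → ℕ) (hx : ∀ i, 1 ≤ i → i ≤ j → x i ≤ c i)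
    (hsum : ∑ i ∈ Finset.Icc 1 j, x i ≤ δ) :
    (∑ i ∈ Finset.Icc 1 j, (piF q (x i) : ℤ)) ≤
      (j : ℤ) - 1 + (piF q (min (lam ℓ).toNat (c ℓ)) : ℤ) +
        ∑ i ∈ Finset.Icc 1 (ℓ - 1), ((piF q (c i) : ℤ) - 1) := by
  classical
  have hQ := DPF.Qceil_pos q
  have hQQ := DPF.Qceil_add_Qfloor q
  have hQf1 : 1 ≤ Qfloor q := by unfold Qfloor; omega
  set Qc := Qceil q with hQcDef
  set Qg : ℕ := Qfloor q - 1 with hQgDef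
  have hQg : Qfloor q = Qg + 1 := by omega
  set I := Finset.Icc 1 j with hIdef
  have hcardI : I.card = j := by rw [hIdef, Nat.card_Icc]; omega
  have hvp : ∀ i ∈ I, piF q (x i) ≤ piF q (c i) := by
    intro i hi
    rw [hIdef, Finset.mem_Icc] at hi
    exact DPF.piF_mono q hq (hx i hi.1 hi.2)
  have hp1 : ∀ i ∈ I, 1 ≤ piF q (c i) := by
    intro i hi
    rw [hIdef, Finset.mem_Icc] at hi
    exact DPF.piF_pos q hq (hc i hi.1 hi.2)
  set V : ℕ := ∑ i ∈ I, piF q (x i) with hVdef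
  have hLHS : (∑ i ∈ I, (piF q (x i) : ℤ)) = (V : ℤ) := by rw [hVdef]; push_cast; rfl
  set Λ : ℤ := lam ℓ with hΛdef
  set L : ℕ := Λ.toNat with hLdef
  have hLΛ : (L : ℤ) = Λ := Int.toNat_of_nonneg (by omega)
  have hL1 : 1 ≤ L := by omega
  set P : ℕ := ∑ i ∈ Finset.Icc 1 (ℓ - 1), (piF q (c i) - 1) with hPdef
  have hsubI : Finset.Icc 1 (ℓ - 1) ⊆ I := by
    intro a ha
    rw [Finset.mem_Icc] at ha
    rw [hIdef, Finset.mem_Icc]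
    omega
  have hPcast : (∑ i ∈ Finset.Icc 1 (ℓ - 1), ((piF q (c i) : ℤ) - 1)) = (P : ℤ) := by
    rw [hPdef, Nat.cast_sum]
    refine Finset.sum_congr rfl fun i hi => ?_
    have := hp1 i (hsubI hi)
    omega
  rw [hLHS, hPcast]
  -- θ(c r) facts
  have hθfB : ∀ i ∈ I, thetaF q (c i) = DPF.fB q (piF q (c i)) := by
    intro i hi
    rw [hIdef, Finset.mem_Icc] at hi
    exact DPF.theta_eq_fB q hq (hc i hi.1 hi.2)
  have hθle : ∀ i ∈ I, thetaF q (c i) ≤ c i := by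
    intro i hi
    rw [hθfB i hi]
    exact DPF.fB_piF_le q hq (c i)
  by_cases hAB : L ≤ c ℓ
  · -- CASE A : min = L
    rw [min_eq_left hAB]
    set n : ℕ := (I.filter fun i => 2 ≤ piF q (x i)).card with hndef
    set n' : ℕ := ((Finset.Icc 1 (ℓ - 1)).filter fun i => 2 ≤ piF q (c i)).card with hn'def
    set S1 : ℕ := ∑ i ∈ I, min (piF q (x i)) 1 with hS1def
    set S2 : ℕ := ∑ i ∈ I, (piF q (x i) - 1) with hS2def
    have hVS : V = S1 + S2 := by
      rw [hVdef, hS1def, hS2def, ← Finset.sum_add_distrib]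
      exact Finset.sum_congr rfl fun i _ => by omega
    have hS1j : S1 ≤ j := by
      calc S1 ≤ ∑ _i ∈ I, 1 := Finset.sum_le_sum fun i _ => by omega
      _ = j := by rw [Finset.sum_const, smul_eq_mul, mul_one, hcardI]
    -- budget
    have hbudget : S1 + Qc * S2 + Qg * n ≤ δ := by
      have hb1 : ∑ i ∈ I, DPF.fB q (piF q (x i)) = S1 + Qc * S2 + Qg * n := by
        rw [Finset.sum_congr rfl fun i (_ : i ∈ I) => DPF.fB_decomp q hq (piF q (x i))]
        rw [Finset.sum_add_distrib, Finset.sum_add_distrib, ← Finset.mul_sum]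
        congr 1
        rw [← Finset.sum_filter, Finset.sum_const, smul_eq_mul, mul_comm]
      have hb2 : ∑ i ∈ I, DPF.fB q (piF q (x i)) ≤ δ :=
        le_trans (Finset.sum_le_sum fun i _ => DPF.fB_piF_le q hq (x i)) hsum
      omega
    -- lam formula
    have hθsum : ∑ r ∈ Finset.Icc 1 (ℓ - 1), ((thetaF q (c r) : ℤ) - 1) =
        ((Qc * P + Qg * n' : ℕ) : ℤ) := by
      have hn1 : ∑ r ∈ Finset.Icc 1 (ℓ - 1), (thetaF q (c r) - 1) = Qc * P + Qg * n' := by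
        have hpt : ∀ r ∈ Finset.Icc 1 (ℓ - 1), thetaF q (c r) - 1 =
            Qc * (piF q (c r) - 1) + (if 2 ≤ piF q (c r) then Qg else 0) := by
          intro r hr
          rw [hθfB r (hsubI hr), DPF.fB_sub_one q hq (hp1 r (hsubI hr))]
        rw [Finset.sum_congr rfl hpt, Finset.sum_add_distrib, ← Finset.mul_sum, ← hPdef]
        congr 1
        rw [← Finset.sum_filter, Finset.sum_const, smul_eq_mul, mul_comm]
      rw [← hn1, Nat.cast_sum]
      refine Finset.sum_congr rfl fun r hr => ?_
      have h1 : 1 ≤ thetaF q (c r) := by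
        rw [hθfB r (hsubI hr)]
        exact DPF.fB_pos q (hp1 r (hsubI hr))
      omega
    have hΛeq : Λ = (δ : ℤ) - j + 1 - ((Qc * P + Qg * n' : ℕ) : ℤ) := by
      rw [hΛdef, hlam ℓ, hθsum]
    -- trivial sub-case
    by_cases hVsmall : V ≤ j + P
    · have hπL : 1 ≤ piF q L := DPF.piF_pos q hq hL1
      omega
    · -- show n' + 1 ≤ n, i.e. rule out n ≤ n'
      have hnn' : n' + 1 ≤ n := by
        by_contra hcon
        have hnle : n ≤ n' := by omega
        -- then V ≤ j + P
        have hA : S2 = ∑ i ∈ I.filter (fun i => 2 ≤ piF q (x i)), (piF q (x i) - 1) := by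
          rw [hS2def]
          exact (Finset.sum_filter_of_ne (fun i _ h => by omega)).symm
        have hA2 : ∑ i ∈ I.filter (fun i => 2 ≤ piF q (x i)), (piF q (x i) - 1) ≤
            ∑ i ∈ I.filter (fun i => 2 ≤ piF q (x i)), (piF q (c i) - 1) := by
          refine Finset.sum_le_sum fun i hi => ?_
          have := hvp i (Finset.filter_subset _ _ hi)
          omega
        have hA3 : ∑ i ∈ I.filter (fun i => 2 ≤ piF q (x i)), (piF q (c i) - 1) ≤
            ∑ i ∈ Finset.Icc 1 n, (piF q (c i) - 1) := by
          refine DPF.sum_mono_subset (fun i => piF q (c i) - 1) j ?_ n _ ?_ rfl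
          · intro a b ha hab hbj
            have h1 : piF q (c b) ≤ piF q (c a) := DPF.piF_mono q hq (hsort a b ha hab hbj)
            show piF q (c b) - 1 ≤ piF q (c a) - 1
            omega
          · rw [hIdef] at *; exact Finset.filter_subset _ _
        have hn'le : n' ≤ ℓ - 1 := by
          calc n' ≤ (Finset.Icc 1 (ℓ - 1)).card := Finset.card_filter_le _ _
          _ = ℓ - 1 := by rw [Nat.card_Icc]; omega
        have hA4 : ∑ i ∈ Finset.Icc 1 n, (piF q (c i) - 1) ≤ P := by
          rw [hPdef]
          refine Finset.sum_le_sum_of_subset ?_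
          intro a ha
          rw [Finset.mem_Icc] at ha ⊢
          omega
        omega
      -- main counting argument
      have hW1 : j + P + 1 ≤ V := by omega
      set W : ℕ := V - j - P with hWdef
      have hWV : W + j + P = V := by omega
      have hWpos : 1 ≤ W := by omega
      have hfBW : DPF.fB q (W + 1) = q + 1 + (W - 1) * Qc := by
        unfold DPF.fB
        rw [if_neg (by omega)]
        have e : W + 1 - 2 = W - 1 := by omega
        rw [e]
      have hZ : (q : ℤ) + 1 + ((W : ℤ) - 1) * Qc ≤ (L : ℤ) := by
        rw [hLΛ, hΛeq]
        have hbz : (S1 : ℤ) + (Qc : ℤ) * S2 + (Qg : ℤ) * n ≤ (δ : ℤ) := by exact_mod_cast hbudget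
        have hVSz : (V : ℤ) = (S1 : ℤ) + S2 := by exact_mod_cast hVS
        have hWVz : (W : ℤ) + j + P = (V : ℤ) := by exact_mod_cast hWV
        have hqz : (Qc : ℤ) + Qg = (q : ℤ) := by
          have : Qc + Qg = q := by omega
          exact_mod_cast this
        have hprod1 : (0 : ℤ) ≤ ((Qc : ℤ) - 1) * ((j : ℤ) - S1) :=
          mul_nonneg (by omega) (by omega)
        have hprod2 : (Qg : ℤ) * 1 ≤ (Qg : ℤ) * ((n : ℤ) - n') :=
          mul_le_mul_of_nonneg_left (by omega) (by omega)
        have hS2z : (S2 : ℤ) = (W : ℤ) + j + P - S1 := by omega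
        have e3 : (Qc : ℤ) * S2 = (Qc : ℤ) * W + (Qc : ℤ) * j + (Qc : ℤ) * P - (Qc : ℤ) * S1 := by
          rw [hS2z]; ring
        push_cast
        linarith [hbz, hprod1, hprod2, e3, hqz]
      have hfBle : DPF.fB q (W + 1) ≤ L := by
        rw [hfBW]
        have hc2 : ((q + 1 + (W - 1) * Qc : ℕ) : ℤ) = (q : ℤ) + 1 + ((W : ℤ) - 1) * Qc := by
          push_cast [Nat.cast_sub hWpos]
          ring
        have := hZ
        rw [← hc2] at this
        exact_mod_cast this
      have hWle : W + 1 ≤ piF q L := by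
        have h1 := DPF.piF_mono q hq hfBle
        rwa [DPF.piF_fB q hq (by omega : 1 ≤ W + 1)] at h1
      omega
  · -- CASE B : c ℓ < L, show ℓ = j
    have hljB : ℓ = j := by
      by_contra hcon
      have hstep : lam (ℓ + 1) = lam ℓ - ((thetaF q (c ℓ) : ℤ) - 1) := by
        rw [hlam (ℓ + 1), hlam ℓ]
        have e : ℓ + 1 - 1 = (ℓ - 1) + 1 := by omega
        rw [e, Finset.sum_Icc_succ_top (by omega : 1 ≤ ℓ - 1 + 1)]
        have e2 : ℓ - 1 + 1 = ℓ := by omega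
        rw [e2]
        ring
      have h0 : lam (ℓ + 1) ≤ 0 := by
        by_contra h'
        have := hℓmax (ℓ + 1) (by omega) (by omega) (by omega)
        omega
      have hθc : (thetaF q (c ℓ) : ℤ) ≤ (c ℓ : ℤ) := by
        have := hθle ℓ (by rw [hIdef, Finset.mem_Icc]; omega)
        exact_mod_cast this
      omega
    have hminr : min L (c ℓ) = c ℓ := min_eq_right (by omega)
    rw [hminr]
    have h1 : V ≤ ∑ i ∈ I, piF q (c i) := Finset.sum_le_sum hvp
    have hIeq : I = Finset.Icc 1 (ℓ - 1 + 1) := by rw [hIdef, hljB]; congr 1; omega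
    have h2 : ∑ i ∈ I, piF q (c i) = P + (ℓ - 1) + piF q (c (ℓ - 1 + 1)) := by
      rw [hIeq, Finset.sum_Icc_succ_top (by omega : 1 ≤ ℓ - 1 + 1)]
      congr 1
      have hpt : ∀ i ∈ Finset.Icc 1 (ℓ - 1), piF q (c i) = (piF q (c i) - 1) + 1 := by
        intro i hi
        have := hp1 i (hsubI hi)
        omega
      rw [Finset.sum_congr rfl hpt, Finset.sum_add_distrib, Finset.sum_const, smul_eq_mul,
        mul_one, Nat.card_Icc, ← hPdef]
      omega
    have h3 : piF q (c (ℓ - 1 + 1)) = piF q (c ℓ) := by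
      rw [show ℓ - 1 + 1 = ℓ by omega]
    omega
end

section
/- Let q be a positive integer, Q = (q+1)/2, n a positive integer, c_1, …, c_n positive integers, and Δ a nonnegative integer with n ≤ Δ ≤ n + q − 1. Then the maximum of ∑_{i=1}^n π(x_i) over all vectors (x_1, …, x_n) of nonnegative integers with x_i ≤ c_i for all i and ∑_{i=1}^n x_i ≤ Δ equals n. -/
lemma cdiv_le_self (a b : ℕ) (hb : 1 ≤ b) : cdiv a b ≤ a := by
  unfold cdiv
  rcases Nat.eq_zero_or_pos a with rfl | ha
  · simp only [Nat.zero_add]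
    simp [Nat.div_eq_of_lt (show b - 1 < b by omega)]
  · rw [Nat.div_le_iff_le_mul_add_pred hb]
    have : a ≤ b * a := Nat.le_mul_of_pos_left a hb
    omega

lemma piF_le_one (q m : ℕ) (hq : 0 < q) (hm : m ≤ q) : piF q m ≤ 1 := by
  unfold piF cdiv
  rw [if_pos hm, Nat.div_le_iff_le_mul_add_pred hq]
  omega

lemma piF_le_self (q m : ℕ) (hq : 0 < q) : piF q m ≤ m := by
  unfold piF
  split
  · rcases Nat.eq_zero_or_pos m with rfl | hm
    · unfold cdiv
      simp only [Nat.zero_add]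
      simp [Nat.div_eq_of_lt (show q - 1 < q by omega)]
    · have := piF_le_one q m hq (by assumption)
      unfold piF at this
      rw [if_pos (by assumption)] at this
      omega
  · have h1 : 1 ≤ Qceil q := by
      unfold Qceil cdiv; omega
    have := cdiv_le_self (m - q) (Qceil q) h1
    omega

lemma piF_big (q m : ℕ) (hq : 0 < q) (hm : q < m) : piF q m + q ≤ m + 1 := by
  unfold piF
  rw [if_neg (by omega)]
  have h1 : 1 ≤ Qceil q := by unfold Qceil cdiv; omega
  have := cdiv_le_self (m - q) (Qceil q) h1
  omega

lemma piF_one (q : ℕ) (hq : 0 < q) : piF q 1 = 1 := by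
  unfold piF cdiv
  rw [if_pos (show (1:ℕ) ≤ q from hq), show 1 + q - 1 = q by omega, Nat.div_self hq]

/-- if `n ≤ Δ ≤ n + q − 1`, the maximum of the multi-depot formulation
`MDF` equals `n`. -/
theorem mdf_max_eq_n (q : ℕ) (hq : 0 < q) (n : ℕ) (hn : 0 < n)
    (c : ℕ → ℕ) (hc : ∀ i, 1 ≤ i → i ≤ n → 0 < c i)
    (Δ : ℕ) (h1 : n ≤ Δ) (h2 : Δ ≤ n + q - 1) :
    IsGreatest {v : ℕ | ∃ x : ℕ → ℕ,
      (∀ i, 1 ≤ i → i ≤ n → x i ≤ c i) ∧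
      (∑ i ∈ Finset.Icc 1 n, x i ≤ Δ) ∧
      v = ∑ i ∈ Finset.Icc 1 n, piF q (x i)} n := by
  constructor
  · refine ⟨fun _ => 1, fun i hi1 hi2 => hc i hi1 hi2, ?_, ?_⟩
    · simp [Nat.card_Icc]; omega
    · simp [piF_one q hq, Nat.card_Icc]
  · rintro v ⟨x, hx, hsum, rfl⟩
    by_cases hall : ∀ i ∈ Finset.Icc 1 n, x i ≤ q
    · calc ∑ i ∈ Finset.Icc 1 n, piF q (x i)
          ≤ ∑ i ∈ Finset.Icc 1 n, 1 :=
            Finset.sum_le_sum fun i hi => piF_le_one q (x i) hq (hall i hi)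
        _ = n := by simp [Nat.card_Icc]
    · push_neg at hall
      obtain ⟨i₀, hi₀, hbig⟩ := hall
      rw [← Finset.add_sum_erase _ _ hi₀]
      have hrest : ∑ i ∈ (Finset.Icc 1 n).erase i₀, piF q (x i)
          ≤ ∑ i ∈ (Finset.Icc 1 n).erase i₀, x i :=
        Finset.sum_le_sum fun i _ => piF_le_self q (x i) hq
      have hsplit : x i₀ + ∑ i ∈ (Finset.Icc 1 n).erase i₀, x i = ∑ i ∈ Finset.Icc 1 n, x i :=
        Finset.add_sum_erase _ _ hi₀
      have := piF_big q (x i₀) hq hbig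
      omega
end

section
/- Let q be a positive integer and Q = (q+1)/2. Suppose m ≥ 2 is an integer and v_1 ≥ v_2 ≥ … ≥ v_m are integers with 1 ≤ v_i ≤ q for all i and v_i + v_j ≥ q + 1 for all i ≠ j. Then v_{m−1} ≥ ⌈Q⌉ and m ≤ ⌈(Δ − q)/⌈Q⌉⌉ + 1, where Δ = ∑_{i=1}^m v_i. -/
/-- for `m ≥ 2` sorted feasible vehicle loads `v 1 ≥ … ≥ v m`, one has
`v (m−1) ≥ ⌈Q⌉` and `m ≤ ⌈(Δ − q)/⌈Q⌉⌉ + 1` where `Δ = ∑ v i`. -/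
theorem sdf_sorted_bound (q : ℕ) (hq : 0 < q) (m : ℕ) (hm : 2 ≤ m) (v : ℕ → ℤ)
    (hsort : ∀ i k, 1 ≤ i → i ≤ k → k ≤ m → v k ≤ v i)
    (hlb : ∀ i, 1 ≤ i → i ≤ m → 1 ≤ v i)
    (hub : ∀ i, 1 ≤ i → i ≤ m → v i ≤ (q : ℤ))
    (hpair : ∀ i k, 1 ≤ i → i ≤ m → 1 ≤ k → k ≤ m → i ≠ k → (q : ℤ) + 1 ≤ v i + v k)
    (Δ : ℤ) (hΔ : Δ = ∑ i ∈ Finset.Icc 1 m, v i) :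
    (Qceil q : ℤ) ≤ v (m - 1) ∧
    (m : ℤ) ≤ ⌈((Δ : ℚ) - (q : ℚ)) / (Qceil q : ℚ)⌉ + 1 := by

  have hc : q + 1 ≤ 2 * Qceil q ∧ 2 * Qceil q ≤ q + 2 := by
    unfold Qceil cdiv; omega
  have hc1 := hc.1
  have hc2 := hc.2
  -- part 1
  have hpm : (q : ℤ) + 1 ≤ v (m - 1) + v m :=
    hpair (m - 1) m (by omega) (by omega) (by omega) le_rfl (by omega)
  have hvm : v m ≤ v (m - 1) := hsort (m - 1) m (by omega) (by omega) le_rfl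
  have goal1 : (Qceil q : ℤ) ≤ v (m - 1) := by omega
  refine ⟨goal1, ?_⟩
  -- sum decomposition
  have h2 : m ∉ Finset.Icc 2 (m - 1) := by simp [Finset.mem_Icc]; omega
  have h1 : 1 ∉ insert m (Finset.Icc 2 (m - 1)) := by
    simp [Finset.mem_Icc]; omega
  have hset : Finset.Icc 1 m = insert 1 (insert m (Finset.Icc 2 (m - 1))) := by
    ext x
    simp only [Finset.mem_Icc, Finset.mem_insert]
    omega
  have hΔ' : Δ = v 1 + (v m + ∑ i ∈ Finset.Icc 2 (m - 1), v i) := by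
    rw [hΔ, hset, Finset.sum_insert h1, Finset.sum_insert h2]
  -- lower bound for the middle sum
  have hS : ((m - 2 : ℕ) : ℤ) * (Qceil q : ℤ) ≤ ∑ i ∈ Finset.Icc 2 (m - 1), v i := by
    have := Finset.card_nsmul_le_sum (Finset.Icc 2 (m - 1)) v ((Qceil q : ℤ))
      (fun i hi => by
        simp only [Finset.mem_Icc] at hi
        exact le_trans goal1 (hsort i (m - 1) (by omega) (by omega) (by omega)))
    rwa [nsmul_eq_mul, Nat.card_Icc, show m - 1 + 1 - 2 = m - 2 by omega] at this
  have h1m : (q : ℤ) + 1 ≤ v 1 + v m :=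
    hpair 1 m (le_refl 1) (by omega) (by omega) le_rfl (by omega)
  have hΔge : (q : ℤ) + 1 + ((m : ℤ) - 2) * (Qceil q : ℤ) ≤ Δ := by
    have : ((m - 2 : ℕ) : ℤ) = (m : ℤ) - 2 := by omega
    rw [hΔ']; rw [this] at hS; linarith
  -- transfer to ℚ and conclude
  have hcpos : (0 : ℚ) < (Qceil q : ℚ) := by
    have : 1 ≤ Qceil q := by omega
    exact_mod_cast Nat.lt_of_lt_of_le Nat.zero_lt_one this
  have hkey : ((m : ℤ) - 2) < ⌈((Δ : ℚ) - (q : ℚ)) / (Qceil q : ℚ)⌉ := by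
    rw [Int.lt_ceil, lt_div_iff₀ hcpos]
    have h' : (q : ℚ) + 1 + ((m : ℚ) - 2) * (Qceil q : ℚ) ≤ (Δ : ℚ) := by
      exact_mod_cast hΔge
    push_cast
    linarith
  omega
end
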